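/- arXiv:quant-ph/0408078 — 5 statements merged into one kernel-verified Lean document; each statement's English description precedes it below -/
import Mathlib

section
/- Let q be a prime power and let C be a linear [n,k]_q code over the finite field F_q. Let d⊥ denote the minimum distance of the dual code C⊥. Arrange the q^k codewords of C as the columns of an n × q^k matrix A over F_q. Then A is an orthogonal array of strength t = d⊥ − 1; that is, for every choice of t = d⊥ − 1 rows of A, every t-tuple of elements of F_q occurs exactly q^{k−t} times among the columns of the corresponding t × q^k subarray. -/
/-!
Restricting the codewords of `C` to `t` coordinates is a linear map `C → F^t`. If it were not
onto, some nonzero functional `a · w` on `F^t` would vanish on its image; extending `a` by zero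
gives a nonzero dual codeword of weight at most `t < d⊥`, which is impossible. So the map is
onto, and every fibre is a coset of its kernel, of dimension `k - t` by rank–nullity, hence of
size `q^(k-t)`.
-/

/-- The dual code of a linear code `C ⊆ F^n`, consisting of all vectors whose
standard dot product with every codeword of `C` vanishes. -/
def dualCode {F : Type*} [CommRing F] {n : ℕ} (C : Submodule F (Fin n → F)) :
    Submodule F (Fin n → F) where
  carrier := {x | ∀ y ∈ C, ∑ i, x i * y i = 0}
  zero_mem' := by simp
  add_mem' := by
    intro a b ha hb y hy
    simp only [Pi.add_apply, add_mul, Finset.sum_add_distrib]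
    rw [ha y hy, hb y hy, add_zero]
  smul_mem' := by
    intro c x hx y hy
    simp only [Pi.smul_apply, smul_eq_mul, mul_assoc, ← Finset.mul_sum]
    rw [hx y hy, mul_zero]

open Function

section Extend

variable {ι κ F : Type*} [Fintype ι] [Fintype κ]

theorem hammingNorm_extend_zero_le [Zero F] [DecidableEq F] (r : ι → κ) (a : ι → F) :
    hammingNorm (extend r a (0 : κ → F)) ≤ Fintype.card ι := by
  classical
  have hsupp : ({j | extend r a (0 : κ → F) j ≠ 0} : Finset κ) ⊆ Finset.univ.image r := by
    intro j hj
    by_contra hj'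
    refine (Finset.mem_filter.mp hj).2 (extend_apply' a (0 : κ → F) j ?_)
    rintro ⟨i, rfl⟩
    exact hj' (Finset.mem_image_of_mem r (Finset.mem_univ i))
  calc hammingNorm (extend r a (0 : κ → F))
      ≤ (Finset.univ.image r).card := Finset.card_le_card hsupp
    _ ≤ Fintype.card ι := Finset.card_image_le

theorem dotProduct_extend_zero [CommSemiring F] {r : ι → κ} (hr : Injective r) (a : ι → F)
    (y : κ → F) : extend r a (0 : κ → F) ⬝ᵥ y = a ⬝ᵥ (y ∘ r) :=
  (Fintype.sum_of_injective r hr _ _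
    (fun j hj ↦ by rw [extend_apply' a (0 : κ → F) j hj, Pi.zero_apply, zero_mul])
    (fun i ↦ by rw [hr.extend_apply, comp_apply])).symm

end Extend

theorem LinearMap.natCard_fiber_eq_natCard_ker {R V W : Type*} [Ring R] [AddCommGroup V]
    [AddCommGroup W] [Module R V] [Module R W] (φ : V →ₗ[R] W) {w : W} (hw : w ∈ range φ) :
    Nat.card {c // φ c = w} = Nat.card (ker φ) := by
  obtain ⟨c₀, rfl⟩ := hw
  exact Nat.card_congr <| (Equiv.subRight c₀).subtypeEquiv fun c ↦ by
    simp [mem_ker, sub_eq_zero]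

theorem LinearMap.natCard_fiber_of_surjective {F V W : Type*} [Field F] [Fintype F]
    [AddCommGroup V] [AddCommGroup W] [Module F V] [Module F W] [FiniteDimensional F V]
    [FiniteDimensional F W] (φ : V →ₗ[F] W) (hφ : Surjective φ) (w : W) :
    Nat.card {c // φ c = w} = Fintype.card F ^ (Module.finrank F V - Module.finrank F W) := by
  have hrank := φ.finrank_range_add_finrank_ker
  rw [range_eq_top.mpr hφ, finrank_top] at hrank
  have : Finite V := Module.finite_of_finite F
  have : Fintype (ker φ) := Fintype.ofFinite _
  rw [φ.natCard_fiber_eq_natCard_ker (range_eq_top.mpr hφ ▸ Submodule.mem_top),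
    Nat.card_eq_fintype_card, Module.card_eq_pow_finrank (K := F)]
  congr 1
  omega

theorem surjective_restrict_of_lt_hammingNorm_dualCode {F ι : Type*} [Field F] [DecidableEq F]
    [Fintype ι] [DecidableEq ι] {n : ℕ} (C : Submodule F (Fin n → F)) {r : ι → Fin n}
    (hr : Injective r) (hdual : ∀ x ∈ dualCode C, x ≠ 0 → Fintype.card ι < hammingNorm x) :
    Surjective ((LinearMap.funLeft F F r).comp C.subtype) := by
  by_contra hns
  rw [← LinearMap.range_eq_top, ← Ne, ← lt_top_iff_ne_top] at hns
  obtain ⟨g, hg, hg_ker⟩ := Submodule.exists_le_ker_of_lt_top _ hns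
  obtain ⟨a, rfl⟩ := (dotProductEquiv F ι).surjective g
  have ha : a ≠ 0 := by
    rintro rfl
    exact hg (map_zero _)
  have hx : extend r a (0 : Fin n → F) ∈ dualCode C := fun y hy ↦
    (dotProduct_extend_zero hr a y).trans (hg_ker ⟨⟨y, hy⟩, rfl⟩)
  have hx₀ : extend r a (0 : Fin n → F) ≠ 0 := by
    obtain ⟨i, hi⟩ := Function.ne_iff.mp ha
    exact fun h ↦ hi ((hr.extend_apply a (0 : Fin n → F) i).symm.trans (congr_fun h (r i)))
  exact (hdual _ hx hx₀).not_ge (hammingNorm_extend_zero_le r a)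

theorem orthogonal_array_of_linear_code_general
    {F : Type*} [Field F] [Fintype F] [DecidableEq F]
    (q n k dperp t : ℕ) (hq : Fintype.card F = q)
    (C : Submodule F (Fin n → F))
    (hk : Module.finrank F C = k)
    (hdual_lb : ∀ x ∈ dualCode C, x ≠ 0 → dperp ≤ hammingNorm x)
    (ht : t = dperp - 1)
    (r : Fin t → Fin n) (hr : Function.Injective r) (v : Fin t → F) :
    Nat.card {c : C // ∀ i : Fin t, (c : Fin n → F) (r i) = v i} = q ^ (k - t) := by
  have hdual : ∀ x ∈ dualCode C, x ≠ 0 → Fintype.card (Fin t) < hammingNorm x := by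
    intro x hx hx₀
    have := hammingNorm_pos_iff.mpr hx₀
    have := hdual_lb x hx hx₀
    rw [Fintype.card_fin]
    omega
  have hsurj := surjective_restrict_of_lt_hammingNorm_dualCode C hr hdual
  calc Nat.card {c : C // ∀ i : Fin t, (c : Fin n → F) (r i) = v i}
      = Nat.card {c // (LinearMap.funLeft F F r).comp C.subtype c = v} :=
        Nat.card_congr (Equiv.subtypeEquivRight fun _ ↦ funext_iff.symm)
    _ = q ^ (k - t) := by
        rw [LinearMap.natCard_fiber_of_surjective _ hsurj, hk, Module.finrank_fin_fun, hq]

/-- **Orthogonal arrays from linear codes** (Theorem 4.6 in Hedayat–Sloane–Stufken):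
if `C` is a linear `[n,k]_q` code whose dual code has minimum distance `d⊥`, then the
`q^k` codewords of `C`, arranged as the columns of an `n × q^k` matrix, form an
orthogonal array of strength `t = d⊥ - 1`: for every choice of `t` distinct rows and
every `t`-tuple `v` of field elements, exactly `q^(k-t)` codewords agree with `v` on
those rows. -/
theorem orthogonal_array_of_linear_code
    {F : Type*} [Field F] [Fintype F] [DecidableEq F]
    (q n k dperp t : ℕ) (hq : Fintype.card F = q)
    (C : Submodule F (Fin n → F))
    (hk : Module.finrank F C = k)
    (hdual_lb : ∀ x ∈ dualCode C, x ≠ 0 → dperp ≤ hammingNorm x)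
    (hdual_attained : ∃ x ∈ dualCode C, x ≠ 0 ∧ hammingNorm x = dperp)
    (ht : t = dperp - 1)
    (r : Fin t → Fin n) (hr : Function.Injective r) (v : Fin t → F) :
    Nat.card {c : C // ∀ i : Fin t, (c : Fin n → F) (r i) = v i} = q ^ (k - t) :=
  orthogonal_array_of_linear_code_general q n k dperp t hq C hk hdual_lb ht r hr v
end

section
/- For all integers d ≥ 2 and n ≥ 1, the Cayley graph of the group Z_d^{2n} with respect to the 2n standard coordinate generators e_1, …, e_{2n} contains a directed Hamilton cycle; equivalently, there exists a cyclic enumeration g_1, …, g_{d^{2n}} of all elements of Z_d^{2n} such that each difference g_{t+1} − g_t (indices mod d^{2n}) is one of the standard coordinate vectors e_1, …, e_{2n}. -/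
/-!
Write `t ∈ ℤ/d^m` in base `d` with digits `a₀, …, a_{m-1}` (and `a_m = 0`) and send it to the
vector `(aᵢ - aᵢ₊₁)ᵢ ∈ Z_d^m`. The digits are recovered from this vector from the top down, so
the map is a bijection. Passing from `t` to `t + 1` adds `1` (mod `d`) to exactly the digits
`a₀, …, a_k`, where `k` is the `d`-adic valuation of `t + 1` capped at `m - 1` (the cap accounts
for the wrap-around `d^m - 1 ↦ 0`); hence only coordinate `k` of the vector changes, by `1`.
-/

theorem eq_of_sub_succ_eq_sub_succ {A : Type*} [AddGroup A] {x y : ℕ → A} {m : ℕ}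
    (hm : x m = y m) (h : ∀ i < m, x i - x (i + 1) = y i - y (i + 1)) {i : ℕ} (hi : i ≤ m) :
    x i = y i := by
  induction hi using Nat.decreasingInduction with
  | self => exact hm
  | of_succ k hk ih => exact sub_left_inj.mp (ih ▸ h k hk)

namespace ModularGrayCode

variable {d m : ℕ} [NeZero d]

/-- The cast to `ZMod d` keeps exactly the `j`-th base-`d` digit of `t`. -/
def digit (t : ZMod (d ^ m)) (j : ℕ) : ZMod d := ((t.val / d ^ j : ℕ) : ZMod d)

theorem digit_of_le (t : ZMod (d ^ m)) {j : ℕ} (hj : m ≤ j) : digit t j = 0 := by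
  have : t.val < d ^ j := t.val_lt.trans_le (Nat.pow_le_pow_right (NeZero.pos d) hj)
  simp [digit, Nat.div_eq_of_lt this]

theorem digit_add_one (t : ZMod (d ^ m)) (j : ℕ) :
    digit (t + 1) j = digit t j + if j < m ∧ d ^ j ∣ t.val + 1 then 1 else 0 := by
  rcases lt_or_ge j m with hj | hj
  · have hval : (t + 1).val = (t.val + 1) % (d ^ j * d ^ (m - j)) := by
      rw [← pow_add, Nat.add_sub_cancel' hj.le, ZMod.val_add, ZMod.val_one_eq_one_mod,
        Nat.add_mod_mod]
    have hcarry : digit (t + 1) j = (((t.val + 1) / d ^ j : ℕ) : ZMod d) := by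
      rw [digit, hval, Nat.mod_mul_right_div_self, ZMod.natCast_eq_natCast_iff' _ _ d,
        Nat.mod_mod_of_dvd _ (dvd_pow_self d (Nat.sub_ne_zero_of_lt hj))]
    rw [hcarry, Nat.succ_div, digit]
    simp [hj]
  · simp [digit_of_le _ hj, hj.not_gt]

theorem eq_of_digit_eq {s t : ZMod (d ^ m)} (h : ∀ j < m, digit s j = digit t j) : s = t := by
  have key : finFunctionFinEquiv.symm ⟨s.val, s.val_lt⟩ =
      finFunctionFinEquiv.symm (⟨t.val, t.val_lt⟩ : Fin (d ^ m)) := by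
    ext j
    have hj := h j j.isLt
    rw [digit, digit, ZMod.natCast_eq_natCast_iff' _ _ d] at hj
    simpa [finFunctionFinEquiv_symm_apply_val] using hj
  exact ZMod.val_injective _ (Fin.mk.inj_iff.mp (finFunctionFinEquiv.symm.injective key))

/-- Guan's modular `d`-ary Gray code. -/
def grayCode (t : ZMod (d ^ m)) (i : Fin m) : ZMod d := digit t i - digit t (i + 1)

theorem grayCode_injective : Function.Injective (grayCode : ZMod (d ^ m) → Fin m → ZMod d) :=
  fun s t h => eq_of_digit_eq fun j hj =>
    eq_of_sub_succ_eq_sub_succ (x := digit s) (y := digit t) (m := m)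
      (by rw [digit_of_le s le_rfl, digit_of_le t le_rfl])
      (fun i hi => congrFun h ⟨i, hi⟩) hj.le

theorem grayCode_bijective : Function.Bijective (grayCode : ZMod (d ^ m) → Fin m → ZMod d) :=
  (Fintype.bijective_iff_injective_and_card _).mpr ⟨grayCode_injective, by simp⟩

theorem grayCode_add_one_sub (hd : d ≠ 1) (hm : 1 ≤ m) (t : ZMod (d ^ m)) :
    grayCode (t + 1) - grayCode t =
      Pi.single ⟨min (multiplicity d (t.val + 1)) (m - 1), by omega⟩ 1 := by
  set k := min (multiplicity d (t.val + 1)) (m - 1) with hk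
  have hfin : FiniteMultiplicity d (t.val + 1) := Nat.finiteMultiplicity_iff.mpr ⟨hd, by omega⟩
  have hcarry (j : ℕ) : (j < m ∧ d ^ j ∣ t.val + 1) ↔ j ≤ k := by
    rw [hfin.pow_dvd_iff_le_multiplicity]
    omega
  ext i
  simp only [Pi.sub_apply, grayCode, digit_add_one, hcarry, Pi.single_apply, Fin.ext_iff]
  split_ifs <;> first | omega | ring

end ModularGrayCode

open ModularGrayCode in
/-- **Hamilton cycle in the Cayley graph of `Z_d^{2n}`.**  For all `d ≥ 2` and
`n ≥ 1`, the Cayley graph of `Z_d^{2n}` with respect to the `2n` standard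
coordinate generators contains a directed Hamilton cycle: there is a cyclic
enumeration `g` of all `d^{2n}` elements of `Z_d^{2n}` such that each consecutive
difference is a standard coordinate vector `e_i`. -/
theorem hamilton_cycle_zmod_pow (d n : ℕ) (hd : 2 ≤ d) (hn : 1 ≤ n) :
    ∃ g : ZMod (d ^ (2 * n)) → (Fin (2 * n) → ZMod d),
      Function.Bijective g ∧
      ∀ t : ZMod (d ^ (2 * n)),
        ∃ i : Fin (2 * n), g (t + 1) - g t = Pi.single i 1 := by
  have : NeZero d := ⟨by omega⟩
  exact ⟨grayCode, grayCode_bijective,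
    fun t => ⟨_, grayCode_add_one_sub (by omega) (by omega) t⟩⟩
end

section
/- For every integer m ≥ 2, there exists an orthogonal array OA(4^m, (4^m − 1)/3, 4, 2): an n × N matrix with n = (4^m − 1)/3 rows and N = 4^m columns over a 4-element symbol set such that for every pair of distinct rows, each of the 16 ordered pairs of symbols occurs exactly 4^{m−2} times among the columns of the corresponding 2 × N subarray. -/
/-!
Work over the field `K` with four elements. Index the rows by the `(4^m - 1)/3` points of the
projective space `ℙ(K^m)`, the columns by the vectors `x ∈ K^m`, and put `⟪p, x⟫` in position
`(p, x)`. Representatives of two distinct points are linearly independent, so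
`x ↦ (⟪p, x⟫, ⟪q, x⟫)` is a surjective linear map `K^m → K^2`, and all its fibres have the same
size `4^m / 16`.
-/

open Finset Matrix
open scoped LinearAlgebra.Projectivization

theorem AddMonoidHom.card_fiber_mul_card_of_surjective {G M F : Type*} [AddGroup G] [Finite G]
    [AddMonoid M] [FunLike F G M] [AddMonoidHomClass F G M]
    (f : F) (hf : Function.Surjective f) (y : M) :
    Nat.card {g // f g = y} * Nat.card M = Nat.card G := by
  classical
  have := Fintype.ofFinite G
  have : Finite M := .of_surjective f hf
  have := Fintype.ofFinite M
  simp only [Nat.card_eq_fintype_card, Fintype.card_subtype]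
  calc #{g | f g = y} * Fintype.card M = ∑ z : M, #{g | f g = z} := by
        simp [card_fiber_eq_of_mem_range f (hf _) (hf y), mul_comm]
    _ = Fintype.card G := (card_eq_sum_card_fiberwise fun _ _ => mem_univ _).symm

theorem Matrix.mulVec_surjective_of_linearIndependent_row {K ι n : Type*} [Field K] [Fintype ι]
    [Fintype n] {A : Matrix ι n K} (h : LinearIndependent K A.row) :
    Function.Surjective A.mulVec := by
  have hrange : LinearMap.range A.mulVecLin = ⊤ := Submodule.eq_top_of_finrank_eq <| by
    rw [← rank, h.rank_matrix, Module.finrank_fintype_fun_eq_card]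
  exact LinearMap.range_eq_top.1 hrange

theorem Projectivization.linearIndependent_rep_pair {K V : Type*} [DivisionRing K]
    [AddCommGroup V] [Module K V] {p q : ℙ K V} (hpq : p ≠ q) :
    LinearIndependent K ![p.rep, q.rep] := by
  convert independent_iff.1 ((independent_pair_iff_ne p q).2 hpq) using 1
  ext i : 1
  fin_cases i <;> rfl

def IsOrthogonalArrayOfStrengthTwo {R C S : Type*} (A : R → C → S) (index : ℕ) : Prop :=
  ∀ r₁ r₂, r₁ ≠ r₂ → ∀ v w, Nat.card {c // A r₁ c = v ∧ A r₂ c = w} = index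

theorem IsOrthogonalArrayOfStrengthTwo.reindex {R C S R' C' S' : Type*} {A : R → C → S}
    {index : ℕ} (hA : IsOrthogonalArrayOfStrengthTwo A index)
    (eR : R' ≃ R) (eC : C' ≃ C) (eS : S ≃ S') :
    IsOrthogonalArrayOfStrengthTwo (fun r c => eS (A (eR r) (eC c))) index := by
  intro r₁ r₂ hr v w
  rw [← hA (eR r₁) (eR r₂) (eR.injective.ne hr) (eS.symm v) (eS.symm w)]
  exact Nat.card_congr <| eC.subtypeEquiv fun c => by simp [← Equiv.eq_symm_apply]

theorem IsOrthogonalArrayOfStrengthTwo.card_filter {R C S : Type*} [Fintype C] [DecidableEq S]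
    {A : R → C → S} {index : ℕ} (hA : IsOrthogonalArrayOfStrengthTwo A index) {r₁ r₂ : R}
    (hr : r₁ ≠ r₂) (v w : S) : #{c | A r₁ c = v ∧ A r₂ c = w} = index := by
  rw [← hA r₁ r₂ hr v w, ← Fintype.card_subtype, Nat.card_eq_fintype_card]

/-- The columns `(⟪p, x⟫)_p` are the codewords of the simplex code, the dual of the Hamming code. -/
noncomputable def simplexArray (K n : Type*) [Field K] [Fintype n] :
    ℙ K (n → K) → (n → K) → K :=
  fun p x => p.rep ⬝ᵥ x

theorem simplexArray_isOrthogonalArrayOfStrengthTwo (K n : Type*) [Field K] [Finite K]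
    [Fintype n] (hn : 2 ≤ Fintype.card n) :
    IsOrthogonalArrayOfStrengthTwo (simplexArray K n) (Nat.card K ^ (Fintype.card n - 2)) := by
  intro p q hpq v w
  let A : Matrix (Fin 2) n K := ![p.rep, q.rep]
  have hcount := AddMonoidHom.card_fiber_mul_card_of_surjective A.mulVecLin
    (mulVec_surjective_of_linearIndependent_row
      (Projectivization.linearIndependent_rep_pair hpq)) ![v, w]
  have hfiber : Nat.card {x // simplexArray K n p x = v ∧ simplexArray K n q x = w} =
      Nat.card {x // A.mulVecLin x = ![v, w]} :=
    Nat.card_congr <| .subtypeEquivRight fun x => by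
      rw [funext_iff, Fin.forall_fin_two]
      rfl
  rw [hfiber]
  rw [Nat.card_fun, Nat.card_fun, Nat.card_fin, Nat.card_eq_fintype_card (α := n),
    ← Nat.sub_add_cancel hn, pow_add] at hcount
  exact Nat.eq_of_mul_eq_mul_right (pow_pos Nat.card_pos 2) hcount

/-- **Existence of the orthogonal arrays `OA(4^m, (4^m-1)/3, 4, 2)`.**  For every
`m ≥ 2` there is a matrix with `n = (4^m - 1)/3` rows and `N = 4^m` columns over a
four-element symbol set such that, for every pair of distinct rows, each of the
`16` ordered pairs of symbols appears exactly `4^{m-2}` times among the columns of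
the corresponding `2 × N` subarray. -/
theorem orthogonal_array_from_hamming_exists (m : ℕ) (hm : 2 ≤ m) :
    ∃ A : Fin ((4 ^ m - 1) / 3) → Fin (4 ^ m) → Fin 4,
      ∀ r₁ r₂ : Fin ((4 ^ m - 1) / 3), r₁ ≠ r₂ →
        ∀ v w : Fin 4,
          (Finset.univ.filter fun j : Fin (4 ^ m) => A r₁ j = v ∧ A r₂ j = w).card =
            4 ^ (m - 2) := by
  let K := GaloisField 2 2
  have hK : Nat.card K = 4 := GaloisField.card 2 2 two_ne_zero
  have hV : Nat.card (Fin m → K) = 4 ^ m := by rw [Nat.card_fun, hK, Nat.card_fin]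
  have hP : Nat.card (ℙ K (Fin m → K)) = (4 ^ m - 1) / 3 := by
    rw [Projectivization.card'', hV, hK]
  have hOA := (simplexArray_isOrthogonalArrayOfStrengthTwo K (Fin m) (by simpa using hm)).reindex
    (Finite.equivFinOfCardEq hP).symm (Finite.equivFinOfCardEq hV).symm
    (Finite.equivFinOfCardEq hK)
  rw [hK, Fintype.card_fin] at hOA
  exact ⟨_, fun _ _ => hOA.card_filter⟩
end

section
/- Let m ≥ 2 and let C ⊆ F_4^n with n = (4^m − 1)/3 be the simplex code, i.e., the dual of the Hamming code H_{4,m}, which is an m-dimensional linear code over F_4. Then there exists a set D ⊆ F_4^n of at most 2m vectors and a cyclic enumeration c_1, …, c_{4^m} of all codewords of C such that every difference c_{t+1} − c_t (indices mod 4^m) lies in D. Consequently, the 4^m columns of the orthogonal array formed by the codewords of C can be ordered so that only 2m different pulse operators are needed for decoupling. -/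
open Finset Module

def IsGrayCycle {V : Type*} [AddCommGroup V] {N : ℕ} (g : ZMod N → V) (D : Finset V) : Prop :=
  Function.Bijective g ∧ ∀ t, g (t + 1) - g t ∈ D

theorem IsGrayCycle.comp_addEquiv {V W : Type*} [AddCommGroup V] [AddCommGroup W] {N : ℕ}
    {g : ZMod N → V} {D : Finset V} (h : IsGrayCycle g D) (e : V ≃+ W) :
    IsGrayCycle (e ∘ g) (D.map e.toEquiv.toEmbedding) :=
  ⟨e.bijective.comp h.1, fun t => by simpa [← map_sub] using h.2 t⟩

theorem IsLowerSet.exists_eq_Iic_of_finite {α : Type*} [LinearOrder α] [Finite α] {s : Set α}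
    (hs : IsLowerSet s) (hne : s.Nonempty) : ∃ k, s = Set.Iic k := by
  obtain ⟨k, hk⟩ := s.toFinite.exists_maximal hne
  exact ⟨k, Set.ext fun i => ⟨hk.le, fun hi => hs hi hk.prop⟩⟩

def digitVector (p d t : ℕ) : Fin d → ZMod p := fun i => ((t / p ^ (i : ℕ) : ℕ) : ZMod p)

theorem digitVector_mod_pow (p d t : ℕ) : digitVector p d (t % p ^ d) = digitVector p d t := by
  funext i
  have hsplit : p ^ d = p ^ (i : ℕ) * p ^ (d - i) := by
    rw [← pow_add, Nat.add_sub_cancel' i.isLt.le]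
  simp only [digitVector, ZMod.natCast_eq_natCast_iff' _ _ p]
  rw [hsplit, Nat.mod_mul_right_div_self, Nat.mod_mod_of_dvd _ (dvd_pow_self p (by omega))]

theorem digitVector_succ_sub (p d t : ℕ) :
    digitVector p d (t + 1) - digitVector p d t =
      fun i : Fin d => if p ^ (i : ℕ) ∣ t + 1 then 1 else 0 := by
  funext i
  simp only [digitVector, Pi.sub_apply, Nat.succ_div, Nat.cast_add]
  split_ifs <;> simp

theorem digitVector_injOn (p d : ℕ) : Set.InjOn (digitVector p d) (Set.Iio (p ^ d)) := by
  intro t ht t' ht' h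
  have hdigits : finFunctionFinEquiv.symm ⟨t, ht⟩ = finFunctionFinEquiv.symm ⟨t', ht'⟩ := by
    funext i
    exact Fin.ext <| by simpa [digitVector, ZMod.natCast_eq_natCast_iff' _ _ p] using congrFun h i
  simpa using congrArg Fin.val (finFunctionFinEquiv.symm.injective hdigits)

theorem exists_isGrayCycle_pi_zmod (p : ℕ) [NeZero p] {d : ℕ} (hd : d ≠ 0) :
    ∃ D : Finset (Fin d → ZMod p), #D ≤ d ∧
      ∃ g : ZMod (p ^ d) → Fin d → ZMod p, IsGrayCycle g D := by
  have : NeZero d := ⟨hd⟩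
  refine ⟨univ.image fun k : Fin d => fun i => if i ≤ k then 1 else 0,
    card_image_le.trans (by simp), fun t => digitVector p d t.val, ?_, fun t => ?_⟩
  · rw [Fintype.bijective_iff_injective_and_card]
    refine ⟨fun t t' h => ZMod.val_injective _ ?_, by simp⟩
    exact digitVector_injOn p d (ZMod.val_lt t) (ZMod.val_lt t') h
  · obtain ⟨k, hk⟩ := IsLowerSet.exists_eq_Iic_of_finite
      (s := {i : Fin d | p ^ (i : ℕ) ∣ t.val + 1})
      (fun i j hji hi => (pow_dvd_pow p hji).trans hi) ⟨0, by simp⟩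
    refine mem_image.mpr ⟨k, mem_univ _, ?_⟩
    show _ = digitVector p d (t + 1).val - digitVector p d t.val
    rw [ZMod.val_add, ZMod.val_one_eq_one_mod, Nat.add_mod_mod, digitVector_mod_pow,
      digitVector_succ_sub]
    funext i
    simp only [← Set.mem_Iic, ← hk, Set.mem_ofPred_eq]

theorem exists_isGrayCycle_of_card_eq_pow {p r : ℕ} [Fact p.Prime] {V : Type*} [AddCommGroup V]
    [Module (ZMod p) V] [Fintype V] (hV : Fintype.card V = p ^ r) (hr : r ≠ 0) :
    ∃ D : Finset V, #D ≤ r ∧ ∃ g : ZMod (Fintype.card V) → V, IsGrayCycle g D := by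
  have hrank : finrank (ZMod p) V = r := by
    refine Nat.pow_right_injective (Fact.out : p.Prime).two_le (?_ : p ^ _ = p ^ r)
    rw [← hV, card_eq_pow_finrank (K := ZMod p) (V := V), ZMod.card]
  let e := (finBasisOfFinrankEq (ZMod p) V hrank).equivFun.symm.toAddEquiv
  obtain ⟨D, hD, g, hg⟩ := exists_isGrayCycle_pi_zmod p hr
  rw [hV]
  exact ⟨_, (card_map _).trans_le hD, _, hg.comp_addEquiv e⟩

theorem finrank_dualCode_add_finrank {F : Type*} [Field F] {n : ℕ}
    (H : Submodule F (Fin n → F)) : finrank F (dualCode H) + finrank F H = n := by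
  classical
  have hdual : dualCode H = H.dualAnnihilator.map (dotProductEquiv F (Fin n)).symm.toLinearMap := by
    ext x
    simp [Submodule.mem_map_equiv, Submodule.mem_dualAnnihilator, dualCode, dotProduct]
  rw [hdual, LinearEquiv.finrank_map_eq, add_comm, Subspace.finrank_add_finrank_dualAnnihilator_eq,
    finrank_fin_fun]

theorem simplex_code_gray_ordering_general
    {F : Type*} [Field F] [Fintype F]
    (m : ℕ) (hF : Fintype.card F = 4) (hm : 2 ≤ m)
    (H : Submodule F (Fin ((4 ^ m - 1) / 3) → F))
    (hdim : Module.finrank F H = (4 ^ m - 1) / 3 - m)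
    (C : Submodule F (Fin ((4 ^ m - 1) / 3) → F)) (hC : C = dualCode H) :
    ∃ D : Finset (Fin ((4 ^ m - 1) / 3) → F), D.card ≤ 2 * m ∧
      ∃ g : ZMod (4 ^ m) → C, Function.Bijective g ∧
        ∀ t : ZMod (4 ^ m),
          ((g (t + 1) : Fin ((4 ^ m - 1) / 3) → F) - (g t : Fin ((4 ^ m - 1) / 3) → F)) ∈ D := by
  have : CharP F 2 := charP_of_card_eq_prime_pow (f := 2) hF
  -- undoes the truncated subtraction in `hdim`
  have hlen : m ≤ (4 ^ m - 1) / 3 := by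
    have : 1 + m * 3 ≤ 4 ^ m := by
      exact_mod_cast one_add_mul_le_pow (by norm_num : (-2 : ℤ) ≤ 3) m
    omega
  have hrank : finrank F C = m := by
    have := finrank_dualCode_add_finrank H
    rw [← hC, hdim] at this
    omega
  have := Fintype.ofFinite C
  have hcard : Fintype.card C = 4 ^ m := by rw [card_eq_pow_finrank (K := F), hF, hrank]
  let : Module (ZMod 2) C := AddCommGroup.zmodModule fun x => by
    rw [← Nat.cast_smul_eq_nsmul F, CharP.cast_eq_zero, zero_smul]
  have hgray := exists_isGrayCycle_of_card_eq_pow (p := 2) (r := 2 * m) (V := C)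
    (by rw [hcard, pow_mul]; norm_num) (by omega)
  rw [hcard] at hgray
  obtain ⟨D, hD, g, hg, hstep⟩ := hgray
  refine ⟨D.map (Function.Embedding.subtype _), (card_map _).trans_le hD, g, hg, fun t => ?_⟩
  simpa using mem_map_of_mem (Function.Embedding.subtype _) (hstep t)

/-- **Gray-code ordering of the simplex code.**  Let `F` be the field with four
elements, `m ≥ 2`, `n = (4^m - 1)/3`, and let `C = H⊥` be the simplex code, the
dual of a Hamming code `H = H_{4,m}` (a linear code of length `n`, dimension
`n - m`, and minimum distance `3`); `C` has dimension `m`.  Then there is a set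
`D` of at most `2m` vectors and a cyclic enumeration of all `4^m` codewords of
`C` in which every consecutive difference lies in `D`.  Consequently, the columns
of the orthogonal array formed by the codewords of `C` can be ordered so that only
`2m` different pulse operators are needed for decoupling. -/
theorem simplex_code_gray_ordering
    {F : Type*} [Field F] [Fintype F] [DecidableEq F]
    (m : ℕ) (hF : Fintype.card F = 4) (hm : 2 ≤ m)
    (H : Submodule F (Fin ((4 ^ m - 1) / 3) → F))
    (hdim : Module.finrank F H = (4 ^ m - 1) / 3 - m)
    (hmin : ∀ x ∈ H, x ≠ 0 → 3 ≤ hammingNorm x)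
    (hmin_attained : ∃ x ∈ H, x ≠ 0 ∧ hammingNorm x = 3)
    (C : Submodule F (Fin ((4 ^ m - 1) / 3) → F)) (hC : C = dualCode H) :
    ∃ D : Finset (Fin ((4 ^ m - 1) / 3) → F), D.card ≤ 2 * m ∧
      ∃ g : ZMod (4 ^ m) → C, Function.Bijective g ∧
        ∀ t : ZMod (4 ^ m),
          ((g (t + 1) : Fin ((4 ^ m - 1) / 3) → F) - (g t : Fin ((4 ^ m - 1) / 3) → F)) ∈ D :=
  simplex_code_gray_ordering_general m hF hm H hdim C hC
end

section
/- Let A be an orthogonal array OA(N, n, 4, 2) with entries in {0,1,2,3}, and identify symbols with the 2 × 2 Pauli matrices σ_0 = I, σ_1 = σ_x, σ_2 = σ_y, σ_3 = σ_z. For each column j ∈ {1, …, N} let P_j = σ_{A(1,j)} ⊗ σ_{A(2,j)} ⊗ ⋯ ⊗ σ_{A(n,j)} acting on (ℂ²)^{⊗n}. Let H be any pair-interaction Hamiltonian on n qubits with no local terms, i.e., H = Σ_{1 ≤ k < l ≤ n} Σ_{α,β ∈ {1,2,3}} J^{k,l}_{α,β} σ_α^{(k)} σ_β^{(l)} with real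 coefficients J^{k,l}_{α,β}, where σ_α^{(k)} denotes the Pauli matrix σ_α acting on qubit k tensored with identity elsewhere. Then Σ_{j=1}^N P_j† H P_j = 0, i.e., the orthogonal-array pulse scheme decouples all pair interactions. -/
/-!
Pauli strings `P = ⊗ σ_{s m}` are unitary, so conjugation by `P` is multiplicative, and it
only changes the sign of a two-site term `σ_α^{(k)} σ_β^{(l)}`, by `ε(s k, α) ε(s l, β)`,
where `σ_s σ_a σ_s = ε(s, a) σ_a`. For `a ≠ 0`
the sign `ε(s, a)` is `+1` for two values of `s` and `-1` for the other two. In an orthogonal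
array of strength 2 every pair `(s k, s l)` occurs equally often among the columns, so the
signs cancel in the sum over the columns, term by term.
-/

open Matrix

/-- The four `2 × 2` Pauli matrices `σ_0 = I, σ_1 = σ_x, σ_2 = σ_y, σ_3 = σ_z`. -/
noncomputable def pauli : Fin 4 → Matrix (Fin 2) (Fin 2) ℂ :=
  ![1, !![0, 1; 1, 0], !![0, -Complex.I; Complex.I, 0], !![1, 0; 0, -1]]

/-- The tensor product `σ_{s 1} ⊗ σ_{s 2} ⊗ ⋯ ⊗ σ_{s n}` of Pauli matrices, acting
on `(ℂ²)^{⊗ n}` (realized as matrices indexed by `Fin n → Fin 2`). -/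
noncomputable def pauliTensor {n : ℕ} (s : Fin n → Fin 4) :
    Matrix (Fin n → Fin 2) (Fin n → Fin 2) ℂ :=
  Matrix.of fun x y => ∏ k, pauli (s k) (x k) (y k)

/-- The Pauli matrix `σ_α` acting on qubit `k` of an `n`-qubit system, tensored with
the identity on all other qubits. -/
noncomputable def pauliOn (n : ℕ) (k : Fin n) (α : Fin 4) :
    Matrix (Fin n → Fin 2) (Fin n → Fin 2) ℂ :=
  Matrix.of fun x y =>
    ∏ l, if l = k then pauli α (x l) (y l) else (if x l = y l then 1 else 0)

theorem conj_mul_of_mul_eq_one {M : Type*} [Monoid M] {P Q : M} (h : P * Q = 1) (X Y : M) :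
    Q * (X * Y) * P = (Q * X * P) * (Q * Y * P) := by
  simp only [mul_assoc, ← mul_assoc P Q, h, one_mul]

namespace Matrix

variable {ι α β γ R : Type*} [Fintype ι] [CommSemiring R]

def piKronecker (M : ι → Matrix α β R) : Matrix (ι → α) (ι → β) R :=
  of fun x y => ∏ i, M i (x i) (y i)

theorem piKronecker_mul [DecidableEq ι] [Fintype β] (M : ι → Matrix α β R)
    (N : ι → Matrix β γ R) :
    piKronecker M * piKronecker N = piKronecker fun i => M i * N i := by
  ext x z
  simp only [piKronecker, mul_apply, of_apply, Fintype.prod_sum, Finset.prod_mul_distrib]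

theorem piKronecker_one [DecidableEq α] :
    piKronecker (fun _ : ι => (1 : Matrix α α R)) = 1 := by
  ext x y
  by_cases hxy : x = y
  · simp [piKronecker, hxy, one_apply]
  · obtain ⟨i, hi⟩ := Function.ne_iff.mp hxy
    simpa [piKronecker, hxy, one_apply] using Finset.prod_eq_zero (Finset.mem_univ i) (by simp [hi])

theorem piKronecker_conjTranspose [StarRing R] (M : ι → Matrix α β R) :
    (piKronecker M)ᴴ = piKronecker fun i => (M i)ᴴ := by
  ext x y
  simp [piKronecker, conjTranspose_apply, star_prod]

theorem piKronecker_smul (c : ι → R) (M : ι → Matrix α β R) :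
    piKronecker (fun i => c i • M i) = (∏ i, c i) • piKronecker M := by
  ext x y
  simp [piKronecker, Finset.prod_mul_distrib]

theorem piKronecker_conj [DecidableEq ι] [Fintype α] [StarRing R] (P M : ι → Matrix α α R)
    (c : ι → R) (h : ∀ i, (P i)ᴴ * M i * P i = c i • M i) :
    (piKronecker P)ᴴ * piKronecker M * piKronecker P = (∏ i, c i) • piKronecker M := by
  simp only [piKronecker_conjTranspose, piKronecker_mul, h, piKronecker_smul]

end Matrix

/-- The sign `ε(s, a)` with `σ_s σ_a σ_s = ε(s, a) σ_a`. -/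
def pauliSign (s a : Fin 4) : ℤ := if s = 0 ∨ a = 0 ∨ s = a then 1 else -1

theorem sum_pauliSign_eq_zero {a : Fin 4} (ha : a ≠ 0) : ∑ s, pauliSign s a = 0 := by
  revert a; decide

theorem pauli_conjTranspose (s : Fin 4) : (pauli s)ᴴ = pauli s := by
  fin_cases s <;> ext i j <;> fin_cases i <;> fin_cases j <;>
    simp [pauli, conjTranspose_apply]

theorem pauli_mul_self (s : Fin 4) : pauli s * pauli s = 1 := by
  fin_cases s <;> ext i j <;> fin_cases i <;> fin_cases j <;>
    simp [pauli, mul_apply, Fin.sum_univ_two, one_apply]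

theorem pauli_conj (s a : Fin 4) :
    (pauli s)ᴴ * pauli a * pauli s = (pauliSign s a : ℂ) • pauli a := by
  rw [pauli_conjTranspose]
  fin_cases s <;> fin_cases a <;> ext i j <;> fin_cases i <;> fin_cases j <;>
    simp [pauli, pauliSign, mul_apply, Fin.sum_univ_two]

theorem pauliTensor_eq_piKronecker {n : ℕ} (s : Fin n → Fin 4) :
    pauliTensor s = piKronecker fun k => pauli (s k) := rfl

theorem pauliOn_eq_pauliTensor (n : ℕ) (k : Fin n) (α : Fin 4) :
    pauliOn n k α = pauliTensor (Pi.single k α) := by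
  ext x y
  simp only [pauliOn, pauliTensor, of_apply]
  refine Finset.prod_congr rfl fun l _ => ?_
  by_cases hl : l = k
  · subst hl; simp
  · simp [hl, pauli, one_apply]

theorem pauliTensor_mul_conjTranspose {n : ℕ} (s : Fin n → Fin 4) :
    pauliTensor s * (pauliTensor s)ᴴ = 1 := by
  simp only [pauliTensor_eq_piKronecker, piKronecker_conjTranspose, pauli_conjTranspose,
    piKronecker_mul, pauli_mul_self, piKronecker_one]

theorem pauliTensor_conj_pauliTensor {n : ℕ} (s a : Fin n → Fin 4) :
    (pauliTensor s)ᴴ * pauliTensor a * pauliTensor s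
      = (∏ k, (pauliSign (s k) (a k) : ℂ)) • pauliTensor a :=
  piKronecker_conj _ _ _ fun k => pauli_conj (s k) (a k)

theorem pauliTensor_conj_pauliOn {n : ℕ} (s : Fin n → Fin 4) (k : Fin n) (α : Fin 4) :
    (pauliTensor s)ᴴ * pauliOn n k α * pauliTensor s
      = (pauliSign (s k) α : ℂ) • pauliOn n k α := by
  rw [pauliOn_eq_pauliTensor, pauliTensor_conj_pauliTensor,
    Fintype.prod_eq_single (M := ℂ) k fun m hm => by simp [hm, pauliSign]]
  simp

theorem pauliTensor_conj_pauliOn_mul_pauliOn {n : ℕ} (s : Fin n → Fin 4) (k l : Fin n)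
    (α β : Fin 4) :
    (pauliTensor s)ᴴ * (pauliOn n k α * pauliOn n l β) * pauliTensor s
      = ((pauliSign (s k) α * pauliSign (s l) β : ℤ) : ℂ) •
          (pauliOn n k α * pauliOn n l β) := by
  rw [conj_mul_of_mul_eq_one (pauliTensor_mul_conjTranspose s), pauliTensor_conj_pauliOn,
    pauliTensor_conj_pauliOn, smul_mul_smul_comm, Int.cast_mul]

theorem sum_comp_eq_nsmul_sum {ι σ M : Type*} [Fintype ι] [Fintype σ] [DecidableEq σ]
    [AddCommMonoid M] (g : ι → σ) (c : ℕ)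
    (hg : ∀ v, (Finset.univ.filter (g · = v)).card = c)
    (f : σ → M) : ∑ j, f (g j) = c • ∑ v, f v := by
  rw [← Finset.sum_fiberwise Finset.univ g, Finset.smul_sum]
  refine Finset.sum_congr rfl fun v _ => ?_
  rw [Finset.sum_congr rfl fun j hj => by rw [(Finset.mem_filter.mp hj).2], Finset.sum_const, hg]

theorem sum_pauliSign_mul_pauliSign_eq_zero {ι : Type*} [Fintype ι] (a b : ι → Fin 4) (c : ℕ)
    (hab : ∀ v w, (Finset.univ.filter fun j => a j = v ∧ b j = w).card = c) {α : Fin 4}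
    (hα : α ≠ 0) (β : Fin 4) : ∑ j, pauliSign (a j) α * pauliSign (b j) β = 0 := by
  have hcard : ∀ p : Fin 4 × Fin 4, (Finset.univ.filter fun j => (a j, b j) = p).card = c :=
    fun p => by simpa only [Prod.ext_iff] using hab p.1 p.2
  rw [sum_comp_eq_nsmul_sum (fun j => (a j, b j)) c hcard
    fun p => pauliSign p.1 α * pauliSign p.2 β]
  simp only [Fintype.sum_prod_type, ← Finset.sum_mul_sum, sum_pauliSign_eq_zero hα, zero_mul,
    smul_zero]

theorem sum_conj_pauliOn_mul_pauliOn_eq_zero {n : ℕ} {ι : Type*} [Fintype ι]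
    (s : ι → Fin n → Fin 4) (k l : Fin n) (c : ℕ)
    (hkl : ∀ v w, (Finset.univ.filter fun j => s j k = v ∧ s j l = w).card = c) {α : Fin 4}
    (hα : α ≠ 0) (β : Fin 4) :
    ∑ j, (pauliTensor (s j))ᴴ * (pauliOn n k α * pauliOn n l β) * pauliTensor (s j) = 0 := by
  simp only [pauliTensor_conj_pauliOn_mul_pauliOn, ← Finset.sum_smul, ← Int.cast_sum,
    sum_pauliSign_mul_pauliSign_eq_zero (s · k) (s · l) c hkl hα β, Int.cast_zero, zero_smul]

/-- **Orthogonal arrays decouple pair-interaction Hamiltonians.**  Let `A` be an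
orthogonal array `OA(N, n, 4, 2)` with entries in `{0,1,2,3}`, and for each column
`j` let `P_j = σ_{A(1,j)} ⊗ ⋯ ⊗ σ_{A(n,j)}`.  Then for every pair-interaction
Hamiltonian `H = Σ_{k<l} Σ_{α,β ≠ 0} J^{k,l}_{α,β} σ_α^{(k)} σ_β^{(l)}` on `n`
qubits with no local terms, one has `Σ_{j=1}^{N} P_j† H P_j = 0`. -/
theorem orthogonal_array_decouples (n N : ℕ)
    (A : Fin n → Fin N → Fin 4)
    (hOA : ∀ r₁ r₂ : Fin n, r₁ ≠ r₂ → ∀ v w : Fin 4,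
      (Finset.univ.filter fun j : Fin N => A r₁ j = v ∧ A r₂ j = w).card = N / 16)
    (J : Fin n → Fin n → Fin 4 → Fin 4 → ℝ)
    (hJ : ∀ k l : Fin n, ∀ α β : Fin 4,
      (¬ k < l ∨ α = 0 ∨ β = 0) → J k l α β = 0)
    (H : Matrix (Fin n → Fin 2) (Fin n → Fin 2) ℂ)
    (hH : H = ∑ k : Fin n, ∑ l : Fin n, ∑ α : Fin 4, ∑ β : Fin 4,
      (J k l α β : ℂ) • (pauliOn n k α * pauliOn n l β)) :
    ∑ j : Fin N, (pauliTensor fun k => A k j)ᴴ * H * (pauliTensor fun k => A k j) = 0 := by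
  subst hH
  have hterm : ∀ k l α β, ∑ j, (J k l α β : ℂ) • ((pauliTensor fun m => A m j)ᴴ *
      (pauliOn n k α * pauliOn n l β) * pauliTensor fun m => A m j) = 0 := by
    intro k l α β
    by_cases hz : J k l α β = 0
    · simp [hz]
    obtain ⟨hkl, hα, -⟩ : k < l ∧ α ≠ 0 ∧ β ≠ 0 := by
      by_contra h
      exact hz (hJ k l α β (by tauto))
    rw [← Finset.smul_sum, sum_conj_pauliOn_mul_pauliOn_eq_zero (fun j m => A m j) k l (N / 16)
      (hOA k l hkl.ne) hα β, smul_zero]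
  -- distribute, then move the sum over the columns `j` innermost
  simp only [Finset.mul_sum, Finset.sum_mul, Matrix.mul_smul, Matrix.smul_mul,
    Finset.sum_comm (γ := Fin N), hterm, Finset.sum_const_zero]
end
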